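/- The weight map modulo 2 is additive with respect to Pauli multiplication only up to a correction: wt(c) ≡ wt(a) + wt(b) + |supp(a) ∩ supp(b)| + |{i ∈ supp(a) ∩ supp(b) : a(i) = b(i)}| (mod 2), where P(a)P(b) = λP(c). In particular, if P(a) and P(b) anticommute and have odd weight, then wt(c) is odd. -/

import Mathlib

open Matrix Complex

noncomputable def pauli : Fin 4 → Matrix (Fin 2) (Fin 2) ℂ
  | 0 => 1
  | 1 => !![0, 1; 1, 0]
  | 2 => !![0, -I; I, 0]
  | 3 => !![1, 0; 0, -1]

/-- Tensor product of Pauli matrices indexed by `a : Fin n → Fin 4`. -/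
noncomputable def PauliProd {n : ℕ} (a : Fin n → Fin 4) :
    Matrix (Fin n → Fin 2) (Fin n → Fin 2) ℂ :=
  Matrix.of fun i j => ∏ k, pauli (a k) (i k) (j k)

/-- Weight: the number of non-identity tensor factors. -/
noncomputable def wt {n : ℕ} (a : Fin n → Fin 4) : ℕ :=
  (Finset.univ.filter fun i => a i ≠ 0).card

/-- Support: the set of qubits on which the Pauli product acts nontrivially. -/
noncomputable def supp {n : ℕ} (a : Fin n → Fin 4) : Finset (Fin n) :=
  Finset.univ.filter fun i => a i ≠ 0

/-!
With the labels I, X, Y, Z = 0, 1, 2, 3, single-qubit Pauli matrices multiply by xor of labels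
up to a nonzero phase, and tensor products of Pauli matrices are trace-orthogonal; hence
`P(a) P(b) = λ P(c)` forces `c = a xor b`, which vanishes exactly where `a i = b i`, and counting
those positions gives the weight formula. Swapping the two factors costs a sign at each position
of `S = {i ∈ supp a ∩ supp b | a i ≠ b i}`, so `P(b) P(a) = (-1)^|S| P(a) P(b)`; anticommutation
therefore makes `|S|` odd, and the formula then makes `wt c` odd.
-/

namespace Matrix

variable {ι R : Type*} [Fintype ι] [CommSemiring R] {m : ι → Type*}

def piKron (A : ∀ k, Matrix (m k) (m k) R) : Matrix (∀ k, m k) (∀ k, m k) R :=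
  of fun i j => ∏ k, A k (i k) (j k)

theorem piKron_smul (c : ι → R) (A : ∀ k, Matrix (m k) (m k) R) :
    (piKron fun k => c k • A k) = (∏ k, c k) • piKron A := by
  ext i j
  simp only [piKron, of_apply, smul_apply, smul_eq_mul, Finset.prod_mul_distrib]

variable [DecidableEq ι] [∀ k, Fintype (m k)]

theorem piKron_mul (A B : ∀ k, Matrix (m k) (m k) R) :
    piKron A * piKron B = piKron fun k => A k * B k := by
  ext i j
  simp only [piKron, mul_apply, of_apply, ← Finset.prod_mul_distrib]
  exact (Fintype.prod_sum fun k r => A k (i k) r * B k r (j k)).symm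

theorem trace_piKron (A : ∀ k, Matrix (m k) (m k) R) :
    trace (piKron A) = ∏ k, trace (A k) := by
  simp only [trace, diag, piKron, of_apply]
  exact (Fintype.prod_sum fun k r => A k r r).symm

end Matrix

theorem PauliProd_eq_piKron {n : ℕ} (a : Fin n → Fin 4) :
    PauliProd a = piKron fun k => pauli (a k) := rfl

noncomputable def pauliPhase : Fin 4 → Fin 4 → ℂ
  | 1, 2 | 2, 3 | 3, 1 => I
  | 2, 1 | 3, 2 | 1, 3 => -I
  | _, _ => 1

theorem pauli_mul_pauli (x y : Fin 4) : pauli x * pauli y = pauliPhase x y • pauli (x ^^^ y) := by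
  fin_cases x <;> fin_cases y <;> ext i j <;> fin_cases i <;> fin_cases j <;>
    simp [pauli, pauliPhase, mul_apply, Fin.sum_univ_two, one_fin_two]

theorem pauliPhase_ne_zero (x y : Fin 4) : pauliPhase x y ≠ 0 := by
  fin_cases x <;> fin_cases y <;> simp [pauliPhase]

theorem pauli_mul_pauli_comm (x y : Fin 4) :
    pauli y * pauli x =
      (if x ≠ 0 ∧ y ≠ 0 ∧ x ≠ y then (-1 : ℂ) else 1) • (pauli x * pauli y) := by
  fin_cases x <;> fin_cases y <;> ext i j <;> fin_cases i <;> fin_cases j <;>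
    simp [pauli, mul_apply, Fin.sum_univ_two, one_fin_two]

theorem trace_pauli_mul_ne_zero_iff (x y : Fin 4) : trace (pauli x * pauli y) ≠ 0 ↔ x = y := by
  fin_cases x <;> fin_cases y <;> simp [pauli, trace_fin_two, one_fin_two]

section PauliProd

variable {n : ℕ}

theorem PauliProd_mul (a b : Fin n → Fin 4) :
    PauliProd a * PauliProd b =
      (∏ k, pauliPhase (a k) (b k)) • PauliProd fun k => a k ^^^ b k := by
  simp only [PauliProd_eq_piKron, piKron_mul, pauli_mul_pauli, piKron_smul]

theorem prod_pauliPhase_ne_zero (a b : Fin n → Fin 4) : ∏ k, pauliPhase (a k) (b k) ≠ 0 :=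
  Finset.prod_ne_zero_iff.2 fun _ _ => pauliPhase_ne_zero _ _

theorem trace_PauliProd_mul_ne_zero_iff (c d : Fin n → Fin 4) :
    trace (PauliProd c * PauliProd d) ≠ 0 ↔ c = d := by
  simp only [PauliProd_eq_piKron, piKron_mul, trace_piKron, Finset.prod_ne_zero_iff,
    Finset.mem_univ, true_implies, trace_pauli_mul_ne_zero_iff, funext_iff]

theorem PauliProd_ne_zero (c : Fin n → Fin 4) : PauliProd c ≠ 0 := fun h0 =>
  (trace_PauliProd_mul_ne_zero_iff c c).2 rfl (by simp [h0])

theorem eq_of_smul_PauliProd_eq_smul {c d : Fin n → Fin 4} {lam mu : ℂ} (hmu : mu ≠ 0)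
    (h : lam • PauliProd c = mu • PauliProd d) : c = d := by
  have htr : lam * trace (PauliProd d * PauliProd c) = mu * trace (PauliProd d * PauliProd d) := by
    simpa [mul_smul_comm, trace_smul] using congrArg (fun M => trace (PauliProd d * M)) h
  have hne : lam * trace (PauliProd d * PauliProd c) ≠ 0 := by
    rw [htr]; exact mul_ne_zero hmu ((trace_PauliProd_mul_ne_zero_iff d d).2 rfl)
  exact ((trace_PauliProd_mul_ne_zero_iff d c).1 (right_ne_zero_of_mul hne)).symm

theorem PauliProd_mul_ne_zero (a b : Fin n → Fin 4) : PauliProd a * PauliProd b ≠ 0 := by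
  rw [PauliProd_mul]
  exact smul_ne_zero (prod_pauliPhase_ne_zero a b) (PauliProd_ne_zero _)

theorem PauliProd_mul_comm (a b : Fin n → Fin 4) :
    PauliProd b * PauliProd a =
      (-1 : ℂ) ^ ((supp a ∩ supp b).filter fun i => a i ≠ b i).card •
        (PauliProd a * PauliProd b) := by
  have hS : ((supp a ∩ supp b).filter fun i => a i ≠ b i) =
      Finset.univ.filter fun k => a k ≠ 0 ∧ b k ≠ 0 ∧ a k ≠ b k := by
    ext k; simp [supp, and_assoc]
  have hfactor : (fun k => pauli (b k) * pauli (a k)) = fun k =>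
      (if a k ≠ 0 ∧ b k ≠ 0 ∧ a k ≠ b k then (-1 : ℂ) else 1) • (pauli (a k) * pauli (b k)) :=
    funext fun k => pauli_mul_pauli_comm (a k) (b k)
  rw [PauliProd_eq_piKron, PauliProd_eq_piKron, piKron_mul, piKron_mul, hfactor, piKron_smul,
    Finset.prod_ite, Finset.prod_const, Finset.prod_const_one, mul_one, hS]

theorem odd_card_of_anticommute {a b : Fin n → Fin 4}
    (h : PauliProd a * PauliProd b = -(PauliProd b * PauliProd a)) :
    Odd ((supp a ∩ supp b).filter fun i => a i ≠ b i).card := by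
  rw [PauliProd_mul_comm a b, ← neg_smul] at h
  have hsign : (1 : ℂ) = -(-1) ^ ((supp a ∩ supp b).filter fun i => a i ≠ b i).card :=
    smul_left_injective ℂ (PauliProd_mul_ne_zero a b) (by simpa only [one_smul] using h)
  exact (neg_one_pow_eq_neg_one_iff_odd (by norm_num)).1 (neg_eq_iff_eq_neg.1 hsign.symm)

end PauliProd

theorem wt_xor {n : ℕ} (a b : Fin n → Fin 4) :
    (wt (fun k => a k ^^^ b k) : ℤ) = wt a + wt b - 2 * (supp a ∩ supp b).card
      + ((supp a ∩ supp b).filter fun i => a i ≠ b i).card := by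
  have hlabel : ∀ x y : Fin 4, (if x ^^^ y ≠ 0 then 1 else 0 : ℤ) =
      (if x ≠ 0 then 1 else 0) + (if y ≠ 0 then 1 else 0) - 2 * (if x ≠ 0 ∧ y ≠ 0 then 1 else 0)
        + (if (x ≠ 0 ∧ y ≠ 0) ∧ x ≠ y then 1 else 0) := by
    decide
  simp only [wt, supp, ← Finset.filter_and, Finset.filter_filter, Finset.card_filter,
    Nat.cast_sum, Nat.cast_ite, Nat.cast_one, Nat.cast_zero, hlabel, Finset.sum_add_distrib,
    Finset.sum_sub_distrib, Finset.mul_sum]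

theorem weight_of_product_general {n : ℕ} (a b c : Fin n → Fin 4) (lam : ℂ)
    (h : PauliProd a * PauliProd b = lam • PauliProd c) :
    (wt c : ℤ) = (wt a : ℤ) + (wt b : ℤ) - 2 * ((supp a ∩ supp b).card : ℤ)
        + (((supp a ∩ supp b).filter fun i => a i ≠ b i).card : ℤ) ∧
      (Odd (wt a) → Odd (wt b) →
        PauliProd a * PauliProd b = -(PauliProd b * PauliProd a) → Odd (wt c)) := by
  have hc : c = fun k => a k ^^^ b k :=
    eq_of_smul_PauliProd_eq_smul (prod_pauliPhase_ne_zero a b)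
      (h.symm.trans (PauliProd_mul a b))
  subst hc
  refine ⟨wt_xor a b, fun ha hb hanti => ?_⟩
  obtain ⟨p, hp⟩ := ha
  obtain ⟨q, hq⟩ := hb
  obtain ⟨r, hr⟩ := odd_card_of_anticommute hanti
  have hwt := wt_xor a b
  rw [Nat.odd_iff]
  omega

/-- Weight formula for the product of two Pauli products, and the consequence
that the product of two anticommuting odd-weight Pauli products has odd weight. -/
theorem weight_of_product {n : ℕ} (a b c : Fin n → Fin 4) (lam : ℂ)
    (hlam : lam ∈ ({1, -1, Complex.I, -Complex.I} : Set ℂ))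
    (h : PauliProd a * PauliProd b = lam • PauliProd c) :
    (wt c : ℤ) = (wt a : ℤ) + (wt b : ℤ) - 2 * ((supp a ∩ supp b).card : ℤ)
        + (((supp a ∩ supp b).filter fun i => a i ≠ b i).card : ℤ) ∧
      (Odd (wt a) → Odd (wt b) →
        PauliProd a * PauliProd b = -(PauliProd b * PauliProd a) → Odd (wt c)) :=
  weight_of_product_general a b c lam h
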